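/- The map ¥_x : B(H_S)^{G_x} → (B(H_S) ⊗ B(L²(X)))^G, A ↦ ∑_{gG_x} U_S(g) A U_S(g)* ⊗ P_{g·x}, is a unital injective *-algebra homomorphism. -/

import Mathlib

open scoped TensorProduct
noncomputable section

/-! The projections `P_{g•x}`, one for each coset `g G_x`, are pairwise orthogonal idempotents
and, by transitivity, sum to the identity of `L²(X)`. Hence `¥ₓ` is multiplicative and unital,
since conjugation by `U_S(g)` is. Applying the vector functional `T ↦ ⟪δₓ, T δₓ⟫` to the second
tensor factor keeps only the summand of the trivial coset, which is `A` itself when `A` is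
`G_x`-invariant: a left inverse of `¥ₓ` on invariant operators. -/

/-- `L²(X)`: the complex Hilbert space of functions `X → ℂ`. -/
abbrev L2 (X : Type*) [Fintype X] := EuclideanSpace ℂ X

/-- The permutation representation of `G` on `L²(X)`, `(g·f)(x) = f(g⁻¹·x)`, as a linear map. -/
def UR_lin {G X : Type*} [Group G] [Fintype X] [MulAction G X] (g : G) :
    L2 X →ₗ[ℂ] L2 X where
  toFun f := WithLp.toLp 2 (fun y => f (g⁻¹ • y))
  map_add' f₁ f₂ := by ext y; simp
  map_smul' c f := by ext y; simp

/-- The permutation (unitary) representation of `G` on `L²(X)`. -/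
def UR (G X : Type*) [Group G] [Fintype X] [MulAction G X] :
    G →* (L2 X →L[ℂ] L2 X) where
  toFun g := (UR_lin g).toContinuousLinearMap
  map_one' := by ext f y; simp [UR_lin] <;> rw [inv_one, one_smul]
  map_mul' g h := by ext f y; simp [UR_lin] <;> rw [mul_smul]

/-- The indicator function `δ_y ∈ L²(X)`. -/
def delta {X : Type*} [Fintype X] [DecidableEq X] (y : X) : L2 X :=
  EuclideanSpace.single y (1:ℂ)

/-- The rank-one projection onto the indicator function `δ_y`. -/
def Pproj {X : Type*} [Fintype X] [DecidableEq X] (y : X) : L2 X →L[ℂ] L2 X :=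
  (innerSL ℂ (delta y)).smulRight (delta y)

/-- Invariance of an operator under a subgroup, `U_S(h) A U_S(h)⁻¹ = A` for all `h ∈ S`. -/
def InvUnder {G HS : Type*} [Group G] [NormedAddCommGroup HS] [InnerProductSpace ℂ HS]
    (US : G →* (HS →L[ℂ] HS)) (S : Subgroup G) (A : HS →L[ℂ] HS) : Prop :=
  ∀ h ∈ S, US h * A * US h⁻¹ = A

/-- The relativisation map `¥ₓ`, with canonical coset representatives. -/
def yen {G X HS : Type*} [Group G] [Finite G] [Fintype X] [DecidableEq X] [MulAction G X]
    [NormedAddCommGroup HS] [InnerProductSpace ℂ HS]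
    (US : G →* (HS →L[ℂ] HS)) (x : X) (A : HS →L[ℂ] HS) :
    (HS →L[ℂ] HS) ⊗[ℂ] (L2 X →L[ℂ] L2 X) :=
  letI : Fintype (G ⧸ MulAction.stabilizer G x) := Fintype.ofFinite _
  ∑ c : G ⧸ MulAction.stabilizer G x,
    (US c.out * A * US c.out⁻¹) ⊗ₜ[ℂ] Pproj (c.out • x)

section TensorSums

variable {R A B ι : Type*} [CommSemiring R] [Semiring A] [Algebra R A] [Semiring B] [Algebra R B]
  [Fintype ι]

theorem sum_tmul_mul_sum_tmul_of_orthogonal {p : ι → B} (hp : Pairwise fun i j => p i * p j = 0)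
    (hp_idem : ∀ i, IsIdempotentElem (p i)) (a b : ι → A) :
    (∑ i, a i ⊗ₜ[R] p i) * (∑ i, b i ⊗ₜ[R] p i) = ∑ i, (a i * b i) ⊗ₜ[R] p i := by
  rw [Finset.sum_mul_sum]
  refine Finset.sum_congr rfl fun i _ => ?_
  rw [Finset.sum_eq_single i (fun j _ hji => by rw [Algebra.TensorProduct.tmul_mul_tmul,
    hp hji.symm, TensorProduct.tmul_zero]) (by simp), Algebra.TensorProduct.tmul_mul_tmul,
    (hp_idem i).eq]

theorem rid_lTensor_sum_tmul {φ : B →ₗ[R] R} {p : ι → B} {i₀ : ι} [DecidableEq ι]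
    (hφ : ∀ i, φ (p i) = if i = i₀ then 1 else 0) (a : ι → A) :
    TensorProduct.rid R A (LinearMap.lTensor A φ (∑ i, a i ⊗ₜ[R] p i)) = a i₀ := by
  simp [hφ]

end TensorSums

section Conjugation

variable {G M : Type*} [Group G] [Monoid M] (f : G →* M)

theorem MonoidHom.conj_mul_conj (g : G) (a b : M) :
    f g * a * f g⁻¹ * (f g * b * f g⁻¹) = f g * (a * b) * f g⁻¹ := by
  have h : f g⁻¹ * f g = 1 := by rw [← map_mul, inv_mul_cancel, map_one]
  simp only [mul_assoc]
  rw [← mul_assoc (f g⁻¹) (f g), h, one_mul]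

theorem MonoidHom.conj_one (g : G) : f g * 1 * f g⁻¹ = 1 := by
  rw [mul_one, ← map_mul, mul_inv_cancel, map_one]

theorem MonoidHom.star_conj [StarMul M] (hf : ∀ g, star (f g) = f g⁻¹) (g : G) (a : M) :
    star (f g * a * f g⁻¹) = f g * star a * f g⁻¹ := by
  rw [star_mul, star_mul, hf, hf, inv_inv, mul_assoc]

end Conjugation

section RankOneProjections

variable {X : Type*} [Fintype X] [DecidableEq X]

theorem Pproj_apply (y : X) (f : L2 X) : Pproj y f = inner ℂ (delta y) f • delta y := rfl

theorem inner_delta_delta (y z : X) :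
    inner ℂ (delta y) (delta z) = if y = z then (1 : ℂ) else 0 := by
  simp [delta, EuclideanSpace.inner_single_left]

theorem Pproj_mul_Pproj (y z : X) : Pproj y * Pproj z = if y = z then Pproj y else 0 := by
  ext f : 1
  rw [mul_apply_eq_comp, Pproj_apply, Pproj_apply, inner_smul_right, inner_delta_delta]
  split_ifs <;> simp [Pproj_apply, *]

theorem sum_Pproj : ∑ y : X, Pproj y = 1 := by
  ext f : 1
  simpa [Pproj_apply, delta] using (EuclideanSpace.basisFun X ℂ).sum_repr' f

theorem isSelfAdjoint_Pproj (y : X) : IsSelfAdjoint (Pproj y) := by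
  rw [ContinuousLinearMap.isSelfAdjoint_iff', eq_comm, ContinuousLinearMap.eq_adjoint_iff]
  intro f g
  simp only [Pproj_apply, inner_smul_left, inner_smul_right, inner_conj_symm, mul_comm]

theorem inner_delta_Pproj_delta (y z : X) :
    inner ℂ (delta z) (Pproj y (delta z)) = if y = z then (1 : ℂ) else 0 := by
  rw [Pproj_apply, inner_smul_right, inner_delta_delta, inner_delta_delta]
  split_ifs <;> simp_all

end RankOneProjections

section Cosets

variable {G X : Type*} [Group G] [MulAction G X] (x : X)

theorem out_smul_eq_ofQuotientStabilizer (c : G ⧸ MulAction.stabilizer G x) :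
    c.out • x = MulAction.ofQuotientStabilizer G x c := by
  conv_rhs => rw [← QuotientGroup.out_eq' c]
  rfl

theorem injective_out_smul :
    Function.Injective fun c : G ⧸ MulAction.stabilizer G x => c.out • x := by
  simpa only [out_smul_eq_ofQuotientStabilizer] using MulAction.injective_ofQuotientStabilizer G x

theorem bijective_out_smul [MulAction.IsPretransitive G X] :
    Function.Bijective fun c : G ⧸ MulAction.stabilizer G x => c.out • x := by
  refine ⟨injective_out_smul x, fun y => ?_⟩
  obtain ⟨g, rfl⟩ := MulAction.exists_smul_eq G x y
  exact ⟨g, out_smul_eq_ofQuotientStabilizer x (g : G ⧸ MulAction.stabilizer G x)⟩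

theorem out_mk_one_mem_stabilizer :
    (QuotientGroup.mk 1 : G ⧸ MulAction.stabilizer G x).out ∈ MulAction.stabilizer G x := by
  rw [MulAction.mem_stabilizer_iff, out_smul_eq_ofQuotientStabilizer,
    MulAction.ofQuotientStabilizer_mk, one_smul]

theorem out_smul_eq_self_iff (c : G ⧸ MulAction.stabilizer G x) :
    c.out • x = x ↔ c = QuotientGroup.mk 1 :=
  (injective_out_smul x).eq_iff' (by rw [out_smul_eq_ofQuotientStabilizer,
    MulAction.ofQuotientStabilizer_mk, one_smul])

end Cosets

section VectorFunctional

variable {𝕜 E : Type*} [RCLike 𝕜] [NormedAddCommGroup E] [InnerProductSpace 𝕜 E]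

def vectorFunctional (v : E) : (E →L[𝕜] E) →ₗ[𝕜] 𝕜 :=
  ((innerSL 𝕜 v).comp (ContinuousLinearMap.apply 𝕜 E v)).toLinearMap

theorem vectorFunctional_apply (v : E) (T : E →L[𝕜] E) :
    vectorFunctional v T = inner 𝕜 v (T v) := rfl

end VectorFunctional

section Yen

variable {G X HS : Type*} [Group G] [Finite G] [Fintype X] [DecidableEq X] [MulAction G X]
  [NormedAddCommGroup HS] [InnerProductSpace ℂ HS] (US : G →* (HS →L[ℂ] HS)) (x : X)

theorem yen_add (A B : HS →L[ℂ] HS) : yen US x (A + B) = yen US x A + yen US x B := by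
  simp only [yen, mul_add, add_mul, TensorProduct.add_tmul, Finset.sum_add_distrib]

theorem yen_smul (c : ℂ) (A : HS →L[ℂ] HS) : yen US x (c • A) = c • yen US x A := by
  simp only [yen, mul_smul_comm, smul_mul_assoc, ← TensorProduct.smul_tmul', Finset.smul_sum]

theorem yen_mul (A B : HS →L[ℂ] HS) : yen US x (A * B) = yen US x A * yen US x B := by
  let : Fintype (G ⧸ MulAction.stabilizer G x) := Fintype.ofFinite _
  have horth (c d : G ⧸ MulAction.stabilizer G x) (hcd : c ≠ d) :
      Pproj (c.out • x) * Pproj (d.out • x) = 0 := by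
    rw [Pproj_mul_Pproj, if_neg ((injective_out_smul x).ne hcd)]
  have hidem (c : G ⧸ MulAction.stabilizer G x) : IsIdempotentElem (Pproj (c.out • x)) := by
    rw [IsIdempotentElem, Pproj_mul_Pproj, if_pos rfl]
  simp only [yen, sum_tmul_mul_sum_tmul_of_orthogonal horth hidem, US.conj_mul_conj]

theorem yen_one [MulAction.IsPretransitive G X] : yen US x 1 = 1 := by
  let : Fintype (G ⧸ MulAction.stabilizer G x) := Fintype.ofFinite _
  simp only [yen, US.conj_one]
  rw [← TensorProduct.tmul_sum, Fintype.sum_bijective _ (bijective_out_smul x) _ Pproj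
    fun _ => rfl, sum_Pproj, Algebra.TensorProduct.one_def]

theorem yen_star [CompleteSpace HS] (hU : ∀ g, star (US g) = US g⁻¹) (A : HS →L[ℂ] HS) :
    letI : Fintype (G ⧸ MulAction.stabilizer G x) := Fintype.ofFinite _
    yen US x (star A) = ∑ c : G ⧸ MulAction.stabilizer G x,
      star (US c.out * A * US c.out⁻¹) ⊗ₜ[ℂ] star (Pproj (c.out • x)) := by
  simp only [yen, US.star_conj hU, (isSelfAdjoint_Pproj _).star_eq]

theorem rid_lTensor_vectorFunctional_yen {A : HS →L[ℂ] HS}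
    (hA : InvUnder US (MulAction.stabilizer G x) A) :
    TensorProduct.rid ℂ _ (LinearMap.lTensor _ (vectorFunctional (delta x)) (yen US x A)) = A := by
  classical
  let : Fintype (G ⧸ MulAction.stabilizer G x) := Fintype.ofFinite _
  unfold yen
  rw [rid_lTensor_sum_tmul (i₀ := QuotientGroup.mk 1) fun c => by
    simp only [vectorFunctional_apply, inner_delta_Pproj_delta, out_smul_eq_self_iff]]
  exact hA _ (out_mk_one_mem_stabilizer x)

theorem yen_injOn :
    Set.InjOn (yen US x) {A | InvUnder US (MulAction.stabilizer G x) A} := fun A hA B hB h => by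
  rw [← rid_lTensor_vectorFunctional_yen US x hA, ← rid_lTensor_vectorFunctional_yen US x hB, h]

end Yen

/-- `¥ₓ` is a unital injective *-algebra homomorphism on `B(H_S)^{G_x}`. -/
theorem stmt6 {G X HS : Type*} [Group G] [Finite G] [Fintype X] [DecidableEq X]
    [MulAction G X] [MulAction.IsPretransitive G X]
    [NormedAddCommGroup HS] [InnerProductSpace ℂ HS] [CompleteSpace HS]
    (US : G →* (HS →L[ℂ] HS))
    (hU : ∀ g : G, ContinuousLinearMap.adjoint (US g) = US g⁻¹)
    (x : X) :
    (∀ A B : HS →L[ℂ] HS, InvUnder US (MulAction.stabilizer G x) A →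
        InvUnder US (MulAction.stabilizer G x) B →
        yen US x (A * B) = yen US x A * yen US x B) ∧
    yen US x (1 : HS →L[ℂ] HS) = 1 ∧
    (∀ A B : HS →L[ℂ] HS, InvUnder US (MulAction.stabilizer G x) A →
        InvUnder US (MulAction.stabilizer G x) B →
        yen US x (A + B) = yen US x A + yen US x B) ∧
    (∀ (c : ℂ) (A : HS →L[ℂ] HS), InvUnder US (MulAction.stabilizer G x) A →
        yen US x (c • A) = c • yen US x A) ∧
    (∀ A : HS →L[ℂ] HS, InvUnder US (MulAction.stabilizer G x) A →
        letI : Fintype (G ⧸ MulAction.stabilizer G x) := Fintype.ofFinite _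
        yen US x (star A) = ∑ c : G ⧸ MulAction.stabilizer G x,
          star (US c.out * A * US c.out⁻¹) ⊗ₜ[ℂ] star (Pproj (c.out • x))) ∧
    (∀ A B : HS →L[ℂ] HS, InvUnder US (MulAction.stabilizer G x) A →
        InvUnder US (MulAction.stabilizer G x) B →
        yen US x A = yen US x B → A = B) :=
  ⟨fun A B _ _ => yen_mul US x A B, yen_one US x, fun A B _ _ => yen_add US x A B,
    fun c A _ => yen_smul US x c A,
    fun A _ => yen_star US x (fun g => by rw [ContinuousLinearMap.star_eq_adjoint, hU]) A,
    fun _ _ hA hB h => yen_injOn US x hA hB h⟩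

end
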